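/- Let α ∈ (0,1) and let X : ℝ → ℝ be continuously differentiable with X(x) = 0 for |x| ≥ 1. Let b : ℝ → ℂ be 2π-periodic, α-Hölder continuous, and satisfying the little-Hölder-α condition. For z ∈ ℝ and ε ∈ (0,1/2) define b_{z,ε}(x) := Σ_{k∈ℤ} X(x − z − 2πk)·( b(z + r_ε(x − z − 2πk)) − b(z) ). Then lim_{ε→0⁺} sup_{z∈ℝ} ( sup_ℝ |b_{z,ε}| + [b_{z,ε}]_α ) = 0; that is, for every η > 0 there exists ε₀ ∈ (0,1/2) such that for all ε ∈ (0,ε₀) and all z ∈ ℝ, sup|b_{z,ε}| + [b_{z,ε}]_α < η. -/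

import Mathlib

open Real

/-- The canonical distance on `ℝ / 2πℤ`: `d_per(x,y) = inf_{k ∈ ℤ} |x - y + 2πk|`. -/
noncomputable def dper (x y : ℝ) : ℝ := ⨅ k : ℤ, |x - y + 2 * π * k|

/-- A function `f : ℝ → ℂ` is `2π`-periodic. -/
def Per (f : ℝ → ℂ) : Prop := ∀ x, f (x + 2 * π) = f x

/-- The truncation `r_ε`: `r_ε(x) = x` if `|x| ≤ ε`, `ε` if `x > ε`, `−ε` if `x < −ε`. -/
noncomputable def rtr (ε x : ℝ) : ℝ := if |x| ≤ ε then x else if ε < x then ε else -ε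

/-- The localized coefficient
`b_{z,ε}(x) = Σ_{k ∈ ℤ} X(x − z − 2πk) · (b(z + r_ε(x − z − 2πk)) − b(z))`. -/
noncomputable def bze (X : ℝ → ℝ) (b : ℝ → ℂ) (z ε x : ℝ) : ℂ :=
  ∑' k : ℤ, (X (x - z - 2 * π * k) : ℂ) * (b (z + rtr ε (x - z - 2 * π * k)) - b z)

/-- The set of (Euclidean) Hölder quotients of `g` with exponent `α`. -/
def holderSet (α : ℝ) (g : ℝ → ℂ) : Set ℝ :=
  {r | ∃ x y : ℝ, x ≠ y ∧ r = ‖g x - g y‖ / |x - y| ^ α}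

/-- `g` is α-Hölder continuous: `[g]_α < ∞`. -/
def HolderFin (α : ℝ) (g : ℝ → ℂ) : Prop := BddAbove (holderSet α g)

/-- The Hölder seminorm `[g]_α`. -/
noncomputable def hSemi (α : ℝ) (g : ℝ → ℂ) : ℝ := sSup (holderSet α g)

/-- The little-Hölder-α condition. -/
def LittleHolder (α : ℝ) (g : ℝ → ℂ) : Prop :=
  ∀ η > (0 : ℝ), ∃ δ > (0 : ℝ), ∀ x y : ℝ, 0 < |x - y| → |x - y| < δ →
    ‖g x - g y‖ / |x - y| ^ α < η

open Filter Topology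

/-!
`b_{z,ε}(· + z)` is the `2π`-periodization of the single bump `F(t) = X(t) (b(z + r_ε t) − b(z))`,
supported in `(−1, 1)`. Since `|r_ε| ≤ ε`, `F` is bounded by `sup|X| · [b]_α ε^α`. Since `r_ε` is
1-Lipschitz with values in `[−ε, ε]`, the Hölder quotients of `t ↦ b(z + r_ε t)` are quotients of
`b` at scale at most `2ε`, hence `≤ η` for small `ε` by the little-Hölder condition. Multiplying by
the Lipschitz function `X` adds `Lip(X) · [b]_α ε^α` to the Hölder constant on scales `≤ 1`, and
periodizing adds twice the sup bound. None of these constants depends on `z`.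
-/

section Truncation

variable {ε : ℝ}

lemma rtr_eq_max_min (hε : 0 ≤ ε) (x : ℝ) : rtr ε x = max (-ε) (min ε x) := by
  unfold rtr
  split_ifs with h₁ h₂
  · rw [abs_le] at h₁
    rw [min_eq_right h₁.2, max_eq_right h₁.1]
  · rw [min_eq_left h₂.le, max_eq_right (by linarith)]
  · rw [abs_le] at h₁
    push Not at h₂
    have hx : x < -ε := by by_contra! h; exact h₁ ⟨h, h₂⟩
    rw [min_eq_right h₂, max_eq_left hx.le]

lemma abs_rtr_le (hε : 0 ≤ ε) (x : ℝ) : |rtr ε x| ≤ ε := by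
  unfold rtr
  split_ifs with h
  · exact h
  · rw [abs_of_nonneg hε]
  · rw [abs_neg, abs_of_nonneg hε]

lemma abs_rtr_sub_rtr_le (hε : 0 ≤ ε) (x y : ℝ) : |rtr ε x - rtr ε y| ≤ |x - y| := by
  rw [rtr_eq_max_min hε, rtr_eq_max_min hε, max_comm (-ε), max_comm (-ε)]
  refine (abs_max_sub_max_le_abs _ _ _).trans ?_
  simpa using abs_min_sub_min_le_max ε x ε y

end Truncation

section HolderSeminorm

variable {α K : ℝ} {g : ℝ → ℂ}

lemma holderSet_nonempty (α : ℝ) (g : ℝ → ℂ) : (holderSet α g).Nonempty :=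
  ⟨_, 0, 1, zero_ne_one, rfl⟩

lemma hSemi_nonneg (hg : HolderFin α g) : 0 ≤ hSemi α g :=
  (div_nonneg (norm_nonneg _) (rpow_nonneg (abs_nonneg _) _)).trans
    (le_csSup hg ⟨0, 1, zero_ne_one, rfl⟩)

lemma norm_sub_le_hSemi_mul (hg : HolderFin α g) (x y : ℝ) :
    ‖g x - g y‖ ≤ hSemi α g * |x - y| ^ α := by
  rcases eq_or_ne x y with rfl | hxy
  · rw [sub_self, norm_zero]
    exact mul_nonneg (hSemi_nonneg hg) (rpow_nonneg (abs_nonneg _) α)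
  · rw [← div_le_iff₀ (rpow_pos_of_pos (abs_pos.2 (sub_ne_zero.2 hxy)) α)]
    exact le_csSup hg ⟨x, y, hxy, rfl⟩

lemma mem_upperBounds_holderSet (h : ∀ x y, ‖g x - g y‖ ≤ K * |x - y| ^ α) :
    K ∈ upperBounds (holderSet α g) := by
  rintro _ ⟨x, y, hxy, rfl⟩
  exact (div_le_iff₀ (rpow_pos_of_pos (abs_pos.2 (sub_ne_zero.2 hxy)) α)).2 (h x y)

lemma holderFin_of_norm_sub_le (h : ∀ x y, ‖g x - g y‖ ≤ K * |x - y| ^ α) : HolderFin α g :=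
  ⟨K, mem_upperBounds_holderSet h⟩

lemma hSemi_le_of_norm_sub_le (h : ∀ x y, ‖g x - g y‖ ≤ K * |x - y| ^ α) : hSemi α g ≤ K :=
  csSup_le (holderSet_nonempty α g) (mem_upperBounds_holderSet h)

lemma LittleHolder.exists_norm_sub_le (hg : LittleHolder α g) (hα : 0 < α) {η : ℝ}
    (hη : 0 < η) : ∃ δ > 0, ∀ x y, |x - y| < δ → ‖g x - g y‖ ≤ η * |x - y| ^ α := by
  obtain ⟨δ, hδ, h⟩ := hg η hη
  refine ⟨δ, hδ, fun x y hxy => ?_⟩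
  rcases eq_or_ne x y with rfl | hne
  · simp [zero_rpow hα.ne']
  · have hpos : 0 < |x - y| := abs_pos.2 (sub_ne_zero.2 hne)
    exact ((div_lt_iff₀ (rpow_pos_of_pos hpos α)).1 (h x y hpos hxy)).le

end HolderSeminorm

section Periodization

variable {E : Type*} [NormedAddCommGroup E] {F : ℝ → E} {S : ℝ}

noncomputable def periodize (F : ℝ → E) (x : ℝ) : E := ∑' k : ℤ, F (x - 2 * π * k)

lemma exists_int_abs_sub_two_pi_mul_le (x : ℝ) : ∃ k : ℤ, |x - 2 * π * k| ≤ π := by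
  refine ⟨round (x / (2 * π)), ?_⟩
  have hround := abs_sub_round (x / (2 * π))
  have hx : x - 2 * π * round (x / (2 * π)) = 2 * π * (x / (2 * π) - round (x / (2 * π))) := by
    field_simp
  rw [hx, abs_mul, abs_of_pos two_pi_pos]
  nlinarith [pi_pos]

lemma periodize_eq_of_abs_sub_lt (hF : ∀ t, 1 ≤ |t| → F t = 0) {x : ℝ} {k : ℤ}
    (hx : |x - 2 * π * k| < 2 * π - 1) : periodize F x = F (x - 2 * π * k) := by
  refine tsum_eq_single k fun j hj => hF _ ?_
  have hjk : (1 : ℝ) ≤ |(j : ℝ) - k| := by exact_mod_cast Int.one_le_abs (sub_ne_zero.2 hj)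
  have hdist : |2 * π * ((j : ℝ) - k)| - |x - 2 * π * k| ≤ |x - 2 * π * j| := by
    have h := abs_sub_abs_le_abs_sub (2 * π * ((j : ℝ) - k)) (x - 2 * π * k)
    rwa [show 2 * π * ((j : ℝ) - k) - (x - 2 * π * k) = -(x - 2 * π * j) by ring, abs_neg] at h
  rw [abs_mul, abs_of_pos two_pi_pos] at hdist
  nlinarith [pi_pos]

lemma norm_periodize_le (hF : ∀ t, 1 ≤ |t| → F t = 0) (hS : ∀ t, ‖F t‖ ≤ S) (x : ℝ) :
    ‖periodize F x‖ ≤ S := by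
  obtain ⟨k, hk⟩ := exists_int_abs_sub_two_pi_mul_le x
  rw [periodize_eq_of_abs_sub_lt hF (by linarith [pi_gt_three])]
  exact hS _

/-- Nearby points see the same translate of `F`; distant points are handled by the sup bound. -/
lemma norm_periodize_sub_le (hF : ∀ t, 1 ≤ |t| → F t = 0) (hS : ∀ t, ‖F t‖ ≤ S) {A α : ℝ}
    (hA : ∀ t s, |t - s| ≤ 1 → ‖F t - F s‖ ≤ A * |t - s| ^ α) (hα : 0 ≤ α) (x y : ℝ) :
    ‖periodize F x - periodize F y‖ ≤ (A + 2 * S) * |x - y| ^ α := by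
  have hA0 : 0 ≤ A := by simpa using (norm_nonneg _).trans (hA 1 0 (by norm_num))
  have hS0 : 0 ≤ S := (norm_nonneg _).trans (hS 0)
  rcases le_or_gt |x - y| 1 with hxy | hxy
  · obtain ⟨k, hk⟩ := exists_int_abs_sub_two_pi_mul_le x
    have hky : |y - 2 * π * k| < 2 * π - 1 := by
      have htri := abs_sub_le y x (2 * π * k)
      rw [abs_sub_comm y x] at htri
      linarith [pi_gt_three]
    rw [periodize_eq_of_abs_sub_lt hF (by linarith [pi_gt_three]),
      periodize_eq_of_abs_sub_lt hF hky]
    calc _ ≤ A * |x - 2 * π * k - (y - 2 * π * k)| ^ α :=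
          hA _ _ (by rwa [sub_sub_sub_cancel_right])
      _ = A * |x - y| ^ α := by rw [sub_sub_sub_cancel_right]
      _ ≤ (A + 2 * S) * |x - y| ^ α := by gcongr; linarith
  · calc ‖periodize F x - periodize F y‖ ≤ S + S :=
          (norm_sub_le _ _).trans
            (add_le_add (norm_periodize_le hF hS x) (norm_periodize_le hF hS y))
      _ ≤ (A + 2 * S) * 1 := by linarith
      _ ≤ (A + 2 * S) * |x - y| ^ α := by gcongr; exact one_le_rpow hxy.le hα

end Periodization

section LocalizedCoefficient

variable {X : ℝ → ℝ} {b : ℝ → ℂ} {α C ε η δ : ℝ} {L : NNReal}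

noncomputable def bzeProfile (X : ℝ → ℝ) (b : ℝ → ℂ) (z ε t : ℝ) : ℂ :=
  (X t : ℂ) * (b (z + rtr ε t) - b z)

lemma bze_eq_periodize (X : ℝ → ℝ) (b : ℝ → ℂ) (z ε x : ℝ) :
    bze X b z ε x = periodize (bzeProfile X b z ε) (x - z) := rfl

lemma bzeProfile_eq_zero (hX : ∀ t, 1 ≤ |t| → X t = 0) (z ε t : ℝ) (ht : 1 ≤ |t|) :
    bzeProfile X b z ε t = 0 := by
  simp [bzeProfile, hX t ht]

lemma norm_sub_rtr_le (hb : HolderFin α b) (hα : 0 ≤ α) (hε : 0 ≤ ε) (z t : ℝ) :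
    ‖b (z + rtr ε t) - b z‖ ≤ hSemi α b * ε ^ α := by
  have hM := hSemi_nonneg hb
  calc _ ≤ hSemi α b * |z + rtr ε t - z| ^ α := norm_sub_le_hSemi_mul hb _ _
    _ ≤ hSemi α b * ε ^ α := by
      rw [add_sub_cancel_left]
      gcongr
      exact abs_rtr_le hε t

lemma norm_rtr_sub_rtr_le (hη : 0 ≤ η) (hα : 0 ≤ α)
    (hδ : ∀ x y, |x - y| < δ → ‖b x - b y‖ ≤ η * |x - y| ^ α) (hε : 0 ≤ ε) (hεδ : 2 * ε < δ)
    (z t s : ℝ) : ‖b (z + rtr ε t) - b (z + rtr ε s)‖ ≤ η * |t - s| ^ α := by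
  have hts : |z + rtr ε t - (z + rtr ε s)| = |rtr ε t - rtr ε s| := by
    rw [add_sub_add_left_eq_sub]
  calc _ ≤ η * |z + rtr ε t - (z + rtr ε s)| ^ α := by
        refine hδ _ _ ?_
        rw [hts]
        linarith [abs_sub (rtr ε t) (rtr ε s), abs_rtr_le hε t, abs_rtr_le hε s]
    _ ≤ η * |t - s| ^ α := by
      rw [hts]
      exact mul_le_mul_of_nonneg_left
        (rpow_le_rpow (abs_nonneg _) (abs_rtr_sub_rtr_le hε t s) hα) hη

lemma norm_bzeProfile_le (hC : ∀ t, ‖X t‖ ≤ C) (hb : HolderFin α b) (hα : 0 ≤ α)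
    (hε : 0 ≤ ε) (z t : ℝ) : ‖bzeProfile X b z ε t‖ ≤ C * (hSemi α b * ε ^ α) := by
  rw [bzeProfile, norm_mul, Complex.norm_real]
  exact mul_le_mul (hC t) (norm_sub_rtr_le hb hα hε z t) (norm_nonneg _)
    ((norm_nonneg _).trans (hC t))

lemma norm_bzeProfile_sub_le (hC : ∀ t, ‖X t‖ ≤ C) (hL : LipschitzWith L X)
    (hb : HolderFin α b) (hα : α ∈ Set.Icc (0 : ℝ) 1) (hη : 0 ≤ η)
    (hδ : ∀ x y, |x - y| < δ → ‖b x - b y‖ ≤ η * |x - y| ^ α) (hε : 0 ≤ ε) (hεδ : 2 * ε < δ)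
    (z : ℝ) {t s : ℝ} (hts : |t - s| ≤ 1) :
    ‖bzeProfile X b z ε t - bzeProfile X b z ε s‖ ≤
      (C * η + L * (hSemi α b * ε ^ α)) * |t - s| ^ α := by
  have hC0 : 0 ≤ C := (norm_nonneg _).trans (hC 0)
  have hpow : |t - s| ≤ |t - s| ^ α := self_le_rpow_of_le_one (abs_nonneg _) hts hα.2
  have hX : ‖X t - X s‖ ≤ L * |t - s| := by
    simpa [dist_eq_norm, Real.dist_eq] using hL.dist_le_mul t s
  have hB := norm_sub_rtr_le hb hα.1 hε z s
  have hB' : 0 ≤ hSemi α b * ε ^ α := (norm_nonneg _).trans hB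
  calc ‖bzeProfile X b z ε t - bzeProfile X b z ε s‖
      = ‖(X t : ℂ) * (b (z + rtr ε t) - b (z + rtr ε s)) +
          ((X t - X s : ℝ) : ℂ) * (b (z + rtr ε s) - b z)‖ := by
        rw [bzeProfile, bzeProfile, Complex.ofReal_sub]
        congr 1
        ring
    _ ≤ ‖X t‖ * ‖b (z + rtr ε t) - b (z + rtr ε s)‖ + ‖X t - X s‖ * ‖b (z + rtr ε s) - b z‖ := by
        refine (norm_add_le _ _).trans_eq ?_
        rw [norm_mul, norm_mul, Complex.norm_real, Complex.norm_real]
    _ ≤ C * (η * |t - s| ^ α) + L * |t - s| * (hSemi α b * ε ^ α) :=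
        add_le_add
          (mul_le_mul (hC t) (norm_rtr_sub_rtr_le hη hα.1 hδ hε hεδ z t s) (norm_nonneg _) hC0)
          (mul_le_mul hX hB (norm_nonneg _) (by positivity))
    _ ≤ (C * η + L * (hSemi α b * ε ^ α)) * |t - s| ^ α := by
        have hLB : 0 ≤ L * (hSemi α b * ε ^ α) := mul_nonneg L.2 hB'
        nlinarith

lemma bze_holderFin_and_le (hXsupp : ∀ t, 1 ≤ |t| → X t = 0) (hC : ∀ t, ‖X t‖ ≤ C)
    (hL : LipschitzWith L X) (hb : HolderFin α b) (hα : α ∈ Set.Icc (0 : ℝ) 1) (hη : 0 ≤ η)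
    (hδ : ∀ x y, |x - y| < δ → ‖b x - b y‖ ≤ η * |x - y| ^ α) (hε : 0 ≤ ε) (hεδ : 2 * ε < δ)
    (z : ℝ) :
    HolderFin α (bze X b z ε) ∧ (⨆ x, ‖bze X b z ε x‖) + hSemi α (bze X b z ε) ≤
      C * η + (L + 3 * C) * (hSemi α b * ε ^ α) := by
  have hF := bzeProfile_eq_zero (b := b) hXsupp z ε
  have hS := norm_bzeProfile_le hC hb hα.1 hε z
  have hA := fun t s => norm_bzeProfile_sub_le (t := t) (s := s) hC hL hb hα hη hδ hε hεδ z
  have hH : ∀ x y, ‖bze X b z ε x - bze X b z ε y‖ ≤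
      (C * η + L * (hSemi α b * ε ^ α) + 2 * (C * (hSemi α b * ε ^ α))) * |x - y| ^ α := by
    intro x y
    simpa only [bze_eq_periodize, sub_sub_sub_cancel_right]
      using norm_periodize_sub_le hF hS hA hα.1 (x - z) (y - z)
  have hsup : (⨆ x, ‖bze X b z ε x‖) ≤ C * (hSemi α b * ε ^ α) :=
    ciSup_le fun x => norm_periodize_le hF hS (x - z)
  refine ⟨holderFin_of_norm_sub_le hH, ?_⟩
  linarith [hSemi_le_of_norm_sub_le hH]

end LocalizedCoefficient

theorem localized_coefficient_small_general
    (α : ℝ) (hα : α ∈ Set.Ioo (0 : ℝ) 1)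
    (X : ℝ → ℝ) (hX : ContDiff ℝ 1 X) (hXsupp : ∀ x : ℝ, 1 ≤ |x| → X x = 0)
    (b : ℝ → ℂ) (hbH : HolderFin α b) (hbl : LittleHolder α b) :
    ∀ η > (0 : ℝ), ∃ ε₀ : ℝ, 0 < ε₀ ∧ ε₀ < 1 / 2 ∧
      ∀ ε : ℝ, 0 < ε → ε < ε₀ → ∀ z : ℝ,
        HolderFin α (bze X b z ε) ∧
        (⨆ x : ℝ, ‖bze X b z ε x‖) + hSemi α (bze X b z ε) < η := by
  intro η hη
  have hXc : HasCompactSupport X := .intro (isCompact_closedBall 0 1) fun x hx => by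
    simp only [Metric.mem_closedBall, Real.dist_eq, sub_zero, not_le] at hx
    exact hXsupp x hx.le
  obtain ⟨C, hC⟩ := hX.continuous.bounded_above_of_compact_support hXc
  obtain ⟨L, hL⟩ := hX.lipschitzWith_of_hasCompactSupport hXc one_ne_zero
  have hC0 : 0 ≤ C := (norm_nonneg _).trans (hC 0)
  obtain ⟨δ, hδ0, hδ⟩ := hbl.exists_norm_sub_le hα.1 (η := η / (2 * (C + 1))) (by positivity)
  have hCη : C * (η / (2 * (C + 1))) < η / 2 := by
    rw [mul_div_assoc', div_lt_div_iff₀ (by positivity) two_pos]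
    nlinarith
  have hsmall : ∀ᶠ ε in 𝓝[>] 0, ε < δ / 2 ∧ (L + 3 * C) * (hSemi α b * ε ^ α) < η / 2 := by
    refine nhdsWithin_le_nhds ((eventually_lt_nhds (half_pos hδ0)).and ?_)
    refine ContinuousAt.eventually_lt (continuousAt_const.mul (continuousAt_const.mul
      (continuousAt_rpow_const 0 α (Or.inr hα.1.le)))) continuousAt_const ?_
    simpa [zero_rpow hα.1.ne'] using half_pos hη
  obtain ⟨ε₀, hε₀, hsub⟩ := mem_nhdsGT_iff_exists_Ioo_subset.1 hsmall
  refine ⟨min ε₀ (1 / 4), lt_min hε₀ (by norm_num), by linarith [min_le_right ε₀ (1 / 4)],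
    fun ε hε hεε₀ z => ?_⟩
  obtain ⟨hεδ, hεsmall⟩ := hsub ⟨hε, hεε₀.trans_le (min_le_left _ _)⟩
  obtain ⟨hfin, hle⟩ := bze_holderFin_and_le hXsupp hC hL hbH (Set.Ioo_subset_Icc_self hα)
    (by positivity) hδ hε.le (by linarith) z
  exact ⟨hfin, by linarith⟩

/-- Uniform smallness of the localized coefficients: for a little-Hölder-α periodic `b`,
`sup |b_{z,ε}| + [b_{z,ε}]_α → 0` as `ε → 0⁺`, uniformly in `z ∈ ℝ`. -/
theorem localized_coefficient_small
    (α : ℝ) (hα : α ∈ Set.Ioo (0 : ℝ) 1)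
    (X : ℝ → ℝ) (hX : ContDiff ℝ 1 X) (hXsupp : ∀ x : ℝ, 1 ≤ |x| → X x = 0)
    (b : ℝ → ℂ) (hb : Per b) (hbH : HolderFin α b) (hbl : LittleHolder α b) :
    ∀ η > (0 : ℝ), ∃ ε₀ : ℝ, 0 < ε₀ ∧ ε₀ < 1 / 2 ∧
      ∀ ε : ℝ, 0 < ε → ε < ε₀ → ∀ z : ℝ,
        HolderFin α (bze X b z ε) ∧
        (⨆ x : ℝ, ‖bze X b z ε x‖) + hSemi α (bze X b z ε) < η :=
  localized_coefficient_small_general α hα X hX hXsupp b hbH hbl
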